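/- arXiv:1701.06033 — 3 statements merged into one kernel-verified Lean document; each statement's English description precedes it below -/
import Mathlib

section
/- Suppose U, V ⊆ [n] are disjoint sets such that H[X_U | Y_N] = 0 and H[X_{[n]∖(U∪V)} | Y_N, X_{U∪V}] = 0. Then H[X_{[n]}] = H[Y_N] + H[X_V | Y_N, X_U]. (Lemma 1 of the paper.) -/
/-!
Setup for the distributed index coding problem: `n` messages `X i` (finitely valued
random variables on a probability space `(Ω, μ)`), one server for each nonempty
subset `J` of `Fin n`, whose output `Y_J = φ_J (X_J)` is a deterministic function of
the messages indexed by `J`.  Shannon entropy `ent` and conditional entropy `cent`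
are defined from scratch (Mathlib has no Shannon entropy of a random variable).
-/

open MeasureTheory Real

namespace DistIndexCoding

variable {Ω : Type*} [MeasurableSpace Ω]

/-- Shannon entropy (in nats) of a finitely-valued random variable. -/
noncomputable def ent {α : Type*} [Fintype α] (μ : Measure Ω) (X : Ω → α) : ℝ :=
  ∑ a : α, negMulLog (μ (X ⁻¹' {a})).toReal

/-- Conditional entropy `H[X | Y]`, defined via the chain rule `H[X|Y] = H[X,Y] - H[Y]`. -/
noncomputable def cent {α β : Type*} [Fintype α] [Fintype β]
    (μ : Measure Ω) (X : Ω → α) (Y : Ω → β) : ℝ :=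
  ent μ (fun ω => (X ω, Y ω)) - ent μ Y

variable {n : ℕ} {𝒳 : Fin n → Type*} {𝒴 : Finset (Fin n) → Type*}

/-- The subtuple `X_S = (X_i : i ∈ S)`. -/
def subtuple (X : ∀ i, Ω → 𝒳 i) (S : Finset (Fin n)) : Ω → (∀ i : S, 𝒳 i.1) :=
  fun ω i => X i.1 ω

/-- The tuple of server outputs `(Y_J = φ_J(X_J) : J satisfying p)`. -/
def outputs (φ : ∀ J : Finset (Fin n), (∀ j : J, 𝒳 j.1) → 𝒴 J)
    (X : ∀ i, Ω → 𝒳 i) (p : Finset (Fin n) → Prop) [DecidablePred p] :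
    Ω → (∀ J : {J : Finset (Fin n) // p J}, 𝒴 J.1) :=
  fun ω J => φ J.1 (fun j => X j.1 ω)

/-!
Entropy is invariant under injective relabelling of a random variable. The tuple `X_[n]`
is such a relabelling of `(X_{[n]∖(U∪V)}, Y_N, X_{U∪V})`, and `(Y_N, X_{U∪V})` of
`(X_V, Y_N, X_U)`, since `Y_N` is a function of the messages. With the two hypotheses this gives
`H[X_[n]] = H[Y_N, X_{U∪V}] = H[X_V, Y_N, X_U] = H[X_V | Y_N, X_U] + H[X_U, Y_N]`
and `H[X_U, Y_N] = H[Y_N]`.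
-/

open Function Finset

section Entropy

variable {α β : Type*} [Fintype α] [Fintype β]

lemma ent_comp_of_injective (μ : Measure Ω) (Z : Ω → α) {f : α → β} (hf : Injective f) :
    ent μ (fun ω => f (Z ω)) = ent μ Z := by
  classical
  refine (Fintype.sum_of_injective f hf _ _ (fun b hb => ?_) (fun a => ?_)).symm
  · have : (fun ω => f (Z ω)) ⁻¹' {b} = ∅ :=
      Set.eq_empty_of_forall_notMem fun ω hω => hb ⟨Z ω, hω⟩
    simp [this]
  · have : (fun ω => f (Z ω)) ⁻¹' {f a} = Z ⁻¹' {a} := by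
      ext ω
      simp [hf.eq_iff]
    rw [this]

lemma ent_prod_comm (μ : Measure Ω) (Z : Ω → α) (W : Ω → β) :
    ent μ (fun ω => (Z ω, W ω)) = ent μ (fun ω => (W ω, Z ω)) :=
  ent_comp_of_injective μ (fun ω => (W ω, Z ω)) (f := Prod.swap) Prod.swap_injective

end Entropy

section Restriction

variable {ι : Type*} [DecidableEq ι] {E : ι → Type*} {s t u : Finset ι}

lemma injective_restrict₂_prod (hs : s ⊆ u) (ht : t ⊆ u) (hu : u ⊆ s ∪ t) :
    Injective fun x : (∀ i : u, E i) => (restrict₂ hs x, restrict₂ ht x) := by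
  intro x y hxy
  funext ⟨i, hi⟩
  rcases mem_union.mp (hu hi) with h | h
  · exact congrFun (congrArg Prod.fst hxy) ⟨i, h⟩
  · exact congrFun (congrArg Prod.snd hxy) ⟨i, h⟩

lemma injective_restrict₂_prod_prod {γ : Type*} (hs : s ⊆ u) (ht : t ⊆ u) (hu : u ⊆ s ∪ t)
    (g : (∀ i : u, E i) → γ) :
    Injective fun x : (∀ i : u, E i) => (restrict₂ hs x, (g x, restrict₂ ht x)) :=
  Injective.of_comp (f := fun p => (p.1, p.2.2)) (injective_restrict₂_prod hs ht hu)

lemma injective_restrict₂_snd_prod {γ : Type*} (hs : s ⊆ u) (ht : t ⊆ u) (hu : u ⊆ s ∪ t) :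
    Injective fun p : γ × (∀ i : u, E i) => (restrict₂ hs p.2, (p.1, restrict₂ ht p.2)) :=
  fun _ _ hpq => Prod.ext (congrArg (·.2.1) hpq)
    (injective_restrict₂_prod hs ht hu (Prod.ext (congrArg (·.1) hpq) (congrArg (·.2.2) hpq)))

end Restriction

theorem lemma1_general
    [∀ i, Fintype (𝒳 i)] [∀ J, Fintype (𝒴 J)]
    (μ : Measure Ω)
    (X : ∀ i, Ω → 𝒳 i) (φ : ∀ J : Finset (Fin n), (∀ j : J, 𝒳 j.1) → 𝒴 J)
    (U V : Finset (Fin n))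
    (hU : cent μ (subtuple X U) (outputs φ X (fun J => J.Nonempty)) = 0)
    (hRest : cent μ (subtuple X (Finset.univ \ (U ∪ V)))
      (fun ω => (outputs φ X (fun J => J.Nonempty) ω, subtuple X (U ∪ V) ω)) = 0) :
    ent μ (subtuple X Finset.univ)
      = ent μ (outputs φ X (fun J => J.Nonempty))
        + cent μ (subtuple X V)
            (fun ω => (outputs φ X (fun J => J.Nonempty) ω, subtuple X U ω)) := by
  set Y := outputs φ X (fun J => J.Nonempty)
  have hAll : ent μ (fun ω =>
      (subtuple X (univ \ (U ∪ V)) ω, (Y ω, subtuple X (U ∪ V) ω))) = ent μ (subtuple X univ) :=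
    (ent_comp_of_injective μ (subtuple X univ)
      (injective_restrict₂_prod_prod (subset_univ (univ \ (U ∪ V))) (subset_univ (U ∪ V))
        (by simp) fun x (J : {J : Finset (Fin n) // J.Nonempty}) =>
          φ J.1 fun j => x ⟨j, mem_univ _⟩) :)
  have hUnion : ent μ (fun ω => (subtuple X V ω, (Y ω, subtuple X U ω)))
      = ent μ (fun ω => (Y ω, subtuple X (U ∪ V) ω)) :=
    (ent_comp_of_injective μ (fun ω => (Y ω, subtuple X (U ∪ V) ω))
      (injective_restrict₂_snd_prod subset_union_right subset_union_left (union_comm U V).subset) :)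
  have hY : ent μ (fun ω => (Y ω, subtuple X U ω)) = ent μ Y :=
    (ent_prod_comm μ _ _).trans (sub_eq_zero.mp hU)
  rw [cent, hY, ← hAll, sub_eq_zero.mp hRest, hUnion]
  ring

/-- **Lemma 1**: if `U, V ⊆ [n]` are disjoint, `H[X_U | Y_N] = 0` and
`H[X_{[n]∖(U∪V)} | Y_N, X_{U∪V}] = 0`, then
`H[X_{[n]}] = H[Y_N] + H[X_V | Y_N, X_U]`. -/
theorem lemma1
    [∀ i, Fintype (𝒳 i)] [∀ i, Nonempty (𝒳 i)] [∀ J, Fintype (𝒴 J)]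
    (μ : Measure Ω) [IsProbabilityMeasure μ]
    (X : ∀ i, Ω → 𝒳 i) (φ : ∀ J : Finset (Fin n), (∀ j : J, 𝒳 j.1) → 𝒴 J)
    (U V : Finset (Fin n)) (hUV : Disjoint U V)
    (hU : cent μ (subtuple X U) (outputs φ X (fun J => J.Nonempty)) = 0)
    (hRest : cent μ (subtuple X (Finset.univ \ (U ∪ V)))
      (fun ω => (outputs φ X (fun J => J.Nonempty) ω, subtuple X (U ∪ V) ω)) = 0) :
    ent μ (subtuple X Finset.univ)
      = ent μ (outputs φ X (fun J => J.Nonempty))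
        + cent μ (subtuple X V)
            (fun ω => (outputs φ X (fun J => J.Nonempty) ω, subtuple X U ω)) :=
  lemma1_general μ X φ U V hU hRest

end DistIndexCoding
end

section
/- Suppose the random variables X_1, …, X_n are mutually independent, U, V ⊆ [n] are disjoint, U ⊆ V̄, and V satisfies H[X_V | Y_N, X_{V̄}] = 0. Let P = {J ∈ N : J ∩ V ≠ ∅}. Then H[X_V] ≤ H[Y_P | X_U]. -/
/-!
With `W = V̄ ∖ U`, independence gives `H[X_V] + H[X_U] + H[X_W] = H[X_V, X_V̄]`. Appending `Y_N`,
a function of all messages, does not change this entropy, and the decoding hypothesis then lets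
us drop `X_V`, leaving `H[Y_N, X_V̄]`. A server whose index set misses `V` is a function of `X_V̄`,
so this equals `H[Y_P, X_U, X_W] ≤ H[Y_P, X_U] + H[X_W]`, and cancelling `H[X_W]` leaves
`H[X_V] + H[X_U] ≤ H[Y_P, X_U]`.
-/

open MeasureTheory Real

namespace DistIndexCoding

variable {Ω : Type*} [MeasurableSpace Ω]

/-- Conditional mutual information `I[X : Y | Z] = H[X | Z] - H[X | Y, Z]`. -/
noncomputable def cmi {α β γ : Type*} [Fintype α] [Fintype β] [Fintype γ]
    (μ : Measure Ω) (X : Ω → α) (Y : Ω → β) (Z : Ω → γ) : ℝ :=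
  cent μ X Z - cent μ X (fun ω => (Y ω, Z ω))

variable {n : ℕ} {𝒳 : Fin n → Type*} {𝒴 : Finset (Fin n) → Type*}

end DistIndexCoding

namespace Real

lemma negMulLog_le_neg_mul_log_add_sub {p q : ℝ} (hp : 0 ≤ p) (hq : 0 ≤ q)
    (hpq : p ≠ 0 → q ≠ 0) : negMulLog p ≤ -(p * log q) + (q - p) := by
  rcases hp.eq_or_lt with rfl | hp
  · simpa using hq
  have hq : 0 < q := hq.lt_of_ne' (hpq hp.ne')
  have key : p * log (q / p) ≤ p * (q / p - 1) :=
    mul_le_mul_of_nonneg_left (log_le_sub_one_of_pos (div_pos hq hp)) hp.le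
  rw [log_div hq.ne' hp.ne', mul_sub_one, mul_div_cancel₀ _ hp.ne'] at key
  rw [negMulLog]
  linarith

lemma sum_negMulLog_le_sum_neg_mul_log {ι : Type*} [Fintype ι] {p q : ι → ℝ}
    (hp : ∀ i, 0 ≤ p i) (hq : ∀ i, 0 ≤ q i) (hpq : ∀ i, p i ≠ 0 → q i ≠ 0)
    (hsum : ∑ i, q i ≤ ∑ i, p i) :
    ∑ i, negMulLog (p i) ≤ ∑ i, -(p i * log (q i)) := by
  have := Finset.sum_le_sum fun i (_ : i ∈ Finset.univ) =>
    negMulLog_le_neg_mul_log_add_sub (hp i) (hq i) (hpq i)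
  rw [Finset.sum_add_distrib, Finset.sum_sub_distrib] at this
  linarith

lemma sum_negMulLog_le_marginals {α β : Type*} [Fintype α] [Fintype β] {P : α × β → ℝ}
    (hP : ∀ c, 0 ≤ P c) (hP1 : ∑ c, P c = 1) :
    ∑ c, negMulLog (P c)
      ≤ ∑ a, negMulLog (∑ b, P (a, b)) + ∑ b, negMulLog (∑ a, P (a, b)) := by
  set pA := fun a => ∑ b, P (a, b)
  set pB := fun b => ∑ a, P (a, b)
  have hle_pA : ∀ a b, P (a, b) ≤ pA a := fun a b =>
    Finset.single_le_sum (fun b _ => hP (a, b)) (Finset.mem_univ b)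
  have hle_pB : ∀ a b, P (a, b) ≤ pB b := fun a b =>
    Finset.single_le_sum (fun a _ => hP (a, b)) (Finset.mem_univ a)
  have hpA1 : ∑ a, pA a = 1 := by rw [← hP1, Fintype.sum_prod_type]
  have hpB1 : ∑ b, pB b = 1 := by rw [← hP1, Fintype.sum_prod_type, Finset.sum_comm]
  have hne : ∀ c, P c ≠ 0 → pA c.1 ≠ 0 ∧ pB c.2 ≠ 0 := fun c hc =>
    ⟨fun h => hc (le_antisymm (h ▸ hle_pA c.1 c.2) (hP c)),
      fun h => hc (le_antisymm (h ▸ hle_pB c.1 c.2) (hP c))⟩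
  have gibbs := sum_negMulLog_le_sum_neg_mul_log (q := fun c => pA c.1 * pB c.2) hP
    (fun c => mul_nonneg ((hP c).trans (hle_pA _ _)) ((hP c).trans (hle_pB _ _)))
    (fun c hc => mul_ne_zero (hne c hc).1 (hne c hc).2)
    (by rw [hP1, Fintype.sum_prod_type]; simp [← Finset.sum_mul_sum, hpA1, hpB1])
  have split : ∀ c, -(P c * log (pA c.1 * pB c.2))
      = -(P c * log (pA c.1)) - P c * log (pB c.2) := by
    intro c
    by_cases hc : P c = 0
    · simp [hc]
    · rw [log_mul (hne c hc).1 (hne c hc).2]; ring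
  refine gibbs.trans (le_of_eq ?_)
  simp only [split, Finset.sum_sub_distrib, Fintype.sum_prod_type]
  rw [Finset.sum_comm (f := fun a b => P (a, b) * log (pB b))]
  simp only [← Finset.sum_mul, negMulLog, Finset.sum_neg_distrib, neg_mul, pA, pB]
  ring

lemma sum_sum_negMulLog_mul {α β : Type*} [Fintype α] [Fintype β] {p : α → ℝ} {q : β → ℝ}
    (hp : ∑ a, p a = 1) (hq : ∑ b, q b = 1) :
    ∑ a, ∑ b, negMulLog (p a * q b) = ∑ a, negMulLog (p a) + ∑ b, negMulLog (q b) := by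
  simp only [negMulLog_mul, Finset.sum_add_distrib, ← Finset.sum_mul, ← Finset.mul_sum, hp, hq,
    one_mul]

end Real

namespace DistIndexCoding

section Determines

variable {Ω α β γ : Type*}

def Determines (A : Ω → α) (B : Ω → β) : Prop := ∃ f : α → β, B = f ∘ A

lemma determines_fst (A : Ω → α) (B : Ω → β) : Determines (fun ω => (A ω, B ω)) A :=
  ⟨Prod.fst, rfl⟩

lemma determines_snd (A : Ω → α) (B : Ω → β) : Determines (fun ω => (A ω, B ω)) B :=
  ⟨Prod.snd, rfl⟩

lemma Determines.trans {A : Ω → α} {B : Ω → β} {C : Ω → γ}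
    (hAB : Determines A B) (hBC : Determines B C) : Determines A C := by
  obtain ⟨f, rfl⟩ := hAB
  obtain ⟨g, rfl⟩ := hBC
  exact ⟨g ∘ f, rfl⟩

lemma Determines.prodMk {A : Ω → α} {B : Ω → β} {C : Ω → γ}
    (hB : Determines A B) (hC : Determines A C) : Determines A (fun ω => (B ω, C ω)) := by
  obtain ⟨f, rfl⟩ := hB
  obtain ⟨g, rfl⟩ := hC
  exact ⟨fun a => (f a, g a), rfl⟩

lemma Determines.measurableSet_preimage [MeasurableSpace Ω] [MeasurableSpace γ] [Countable γ]
    [MeasurableSingletonClass γ] {W : Ω → γ} {A : Ω → α} (h : Determines W A)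
    (hW : Measurable W) (s : Set α) : MeasurableSet (A ⁻¹' s) := by
  obtain ⟨f, rfl⟩ := h
  exact hW (Set.to_countable (f ⁻¹' s)).measurableSet

end Determines

section Entropy

variable {Ω α β : Type*} [MeasurableSpace Ω] [Fintype α] [Fintype β] {μ : Measure Ω}

lemma ent_comp_of_injective_s5 {f : α → β} (hf : Function.Injective f) (A : Ω → α) :
    ent μ (f ∘ A) = ent μ A := by
  refine (Fintype.sum_of_injective f hf _ _ (fun b hb => ?_) (fun a => ?_)).symm
  · rw [Set.preimage_comp, Set.preimage_singleton_eq_empty.2 hb]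
    simp
  · rw [Set.preimage_comp, ← Set.image_singleton, hf.preimage_image]

lemma Determines.ent_pair_eq {A : Ω → α} {B : Ω → β} (h : Determines A B) :
    ent μ (fun ω => (A ω, B ω)) = ent μ A := by
  obtain ⟨f, rfl⟩ := h
  exact ent_comp_of_injective_s5 (f := fun a => (a, f a)) (fun _ _ h => congrArg Prod.fst h) A

lemma ent_pair_comm (A : Ω → α) (B : Ω → β) :
    ent μ (fun ω => (A ω, B ω)) = ent μ (fun ω => (B ω, A ω)) :=
  (ent_comp_of_injective_s5 Prod.swap_injective _).symm

lemma ent_eq_of_determines {A : Ω → α} {B : Ω → β} (hAB : Determines A B)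
    (hBA : Determines B A) : ent μ A = ent μ B := by
  rw [← hAB.ent_pair_eq, ent_pair_comm, hBA.ent_pair_eq]

lemma ent_pair_eq_sum_negMulLog_inter (A : Ω → α) (B : Ω → β) :
    ent μ (fun ω => (A ω, B ω)) = ∑ c : α × β, negMulLog (μ.real (A ⁻¹' {c.1} ∩ B ⁻¹' {c.2})) := by
  refine Finset.sum_congr rfl fun c _ => ?_
  rw [← measureReal_def]
  congr 2
  ext ω
  simp [Prod.ext_iff]

lemma sum_measureReal_preimage_singleton_eq_one [IsProbabilityMeasure μ] {A : Ω → α}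
    (hA : ∀ a, MeasurableSet (A ⁻¹' {a})) : ∑ a, μ.real (A ⁻¹' {a}) = 1 := by
  rw [sum_measureReal_preimage_singleton _ fun a _ => hA a]
  simp

lemma sum_measureReal_inter_preimage_singleton [IsFiniteMeasure μ] {s : Set Ω} {B : Ω → β}
    (hB : ∀ b, MeasurableSet (B ⁻¹' {b})) : ∑ b, μ.real (s ∩ B ⁻¹' {b}) = μ.real s := by
  simp_rw [Set.inter_comm s, ← measureReal_restrict_apply (hB _)]
  rw [sum_measureReal_preimage_singleton _ fun b _ => hB b]
  simp

lemma ent_pair_le_add [IsProbabilityMeasure μ] {A : Ω → α} {B : Ω → β}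
    (hA : ∀ a, MeasurableSet (A ⁻¹' {a})) (hB : ∀ b, MeasurableSet (B ⁻¹' {b})) :
    ent μ (fun ω => (A ω, B ω)) ≤ ent μ A + ent μ B := by
  have marginal_A : ∀ a, ∑ b, μ.real (A ⁻¹' {a} ∩ B ⁻¹' {b}) = μ.real (A ⁻¹' {a}) := fun a =>
    sum_measureReal_inter_preimage_singleton hB
  have marginal_B : ∀ b, ∑ a, μ.real (A ⁻¹' {a} ∩ B ⁻¹' {b}) = μ.real (B ⁻¹' {b}) := fun b => by
    simp only [Set.inter_comm _ (B ⁻¹' {b})]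
    exact sum_measureReal_inter_preimage_singleton hA
  have hsum_inter : ∑ c : α × β, μ.real (A ⁻¹' {c.1} ∩ B ⁻¹' {c.2}) = 1 := by
    rw [Fintype.sum_prod_type]
    simp only [marginal_A]
    exact sum_measureReal_preimage_singleton_eq_one hA
  have key := Real.sum_negMulLog_le_marginals (fun _ => measureReal_nonneg) hsum_inter
  simp only [marginal_A, marginal_B] at key
  rwa [ent_pair_eq_sum_negMulLog_inter]

lemma ent_pair_eq_add_of_indepFun [MeasurableSpace α] [MeasurableSingletonClass α]
    [MeasurableSpace β] [MeasurableSingletonClass β] [IsProbabilityMeasure μ]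
    {A : Ω → α} {B : Ω → β} (hA : Measurable A) (hB : Measurable B)
    (hAB : ProbabilityTheory.IndepFun A B μ) :
    ent μ (fun ω => (A ω, B ω)) = ent μ A + ent μ B := by
  rw [ent_pair_eq_sum_negMulLog_inter, Fintype.sum_prod_type]
  simp only [measureReal_def, hAB.measure_inter_preimage_eq_mul _ _ (measurableSet_singleton _)
    (measurableSet_singleton _), ENNReal.toReal_mul]
  exact Real.sum_sum_negMulLog_mul
    (sum_measureReal_preimage_singleton_eq_one fun a => hA (measurableSet_singleton a))
    (sum_measureReal_preimage_singleton_eq_one fun b => hB (measurableSet_singleton b))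

end Entropy

section Subtuples

variable {Ω : Type*} {n : ℕ} {𝒳 : Fin n → Type*} {𝒴 : Finset (Fin n) → Type*}

lemma determines_subtuple_of_subset (X : ∀ i, Ω → 𝒳 i) {S T : Finset (Fin n)} (h : S ⊆ T) :
    Determines (subtuple X T) (subtuple X S) :=
  ⟨fun x i => x ⟨i, h i.2⟩, rfl⟩

lemma determines_subtuple_of_subset_union (X : ∀ i, Ω → 𝒳 i) {R S T : Finset (Fin n)}
    (h : R ⊆ S ∪ T) : Determines (fun ω => (subtuple X S ω, subtuple X T ω)) (subtuple X R) := by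
  refine ⟨fun x i => if hi : i.1 ∈ S then x.1 ⟨i, hi⟩
    else x.2 ⟨i, (Finset.mem_union.1 (h i.2)).resolve_left hi⟩, ?_⟩
  funext ω i
  simp only [Function.comp_apply]
  split <;> rfl

lemma determines_outputs_of_subset (φ : ∀ J : Finset (Fin n), (∀ j : J, 𝒳 j.1) → 𝒴 J)
    (X : ∀ i, Ω → 𝒳 i) {p : Finset (Fin n) → Prop} [DecidablePred p] {S : Finset (Fin n)}
    (h : ∀ J, p J → J ⊆ S) : Determines (subtuple X S) (outputs φ X p) :=
  ⟨fun x J => φ J (fun j => x ⟨j, h J J.2 j.2⟩), rfl⟩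

lemma determines_outputs (φ : ∀ J : Finset (Fin n), (∀ j : J, 𝒳 j.1) → 𝒴 J)
    (X : ∀ i, Ω → 𝒳 i) {p q : Finset (Fin n) → Prop} [DecidablePred p] [DecidablePred q]
    {S : Finset (Fin n)} (h : ∀ J, p J → q J ∨ J ⊆ S) :
    Determines (fun ω => (outputs φ X q ω, subtuple X S ω)) (outputs φ X p) := by
  refine ⟨fun x J => if hq : q J then x.1 ⟨J, hq⟩
    else φ J (fun j => x.2 ⟨j, (h J J.2).resolve_left hq j.2⟩), ?_⟩
  funext ω J
  simp only [Function.comp_apply]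
  split <;> rfl

end Subtuples

section SubtupleEntropy

variable {Ω : Type*} [MeasurableSpace Ω] {n : ℕ} {𝒳 : Fin n → Type*} {𝒴 : Finset (Fin n) → Type*}

lemma measurableSet_preimage_outputs_subtuple [∀ i, MeasurableSpace (𝒳 i)]
    [∀ i, MeasurableSingletonClass (𝒳 i)] [∀ i, Finite (𝒳 i)] {X : ∀ i, Ω → 𝒳 i}
    (hXmeas : ∀ i, Measurable (X i)) (φ : ∀ J : Finset (Fin n), (∀ j : J, 𝒳 j.1) → 𝒴 J)
    (p : Finset (Fin n) → Prop) [DecidablePred p] (S : Finset (Fin n)) (s : Set _) :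
    MeasurableSet ((fun ω => (outputs φ X p ω, subtuple X S ω)) ⁻¹' s) :=
  ((determines_outputs_of_subset φ X fun J _ => Finset.subset_univ J).prodMk
    (determines_subtuple_of_subset X (Finset.subset_univ S))).measurableSet_preimage
    (measurable_pi_lambda _ fun i => hXmeas i.1) s

lemma measurableSet_preimage_subtuple [∀ i, MeasurableSpace (𝒳 i)]
    [∀ i, MeasurableSingletonClass (𝒳 i)] [∀ i, Finite (𝒳 i)] {X : ∀ i, Ω → 𝒳 i}
    (hXmeas : ∀ i, Measurable (X i)) (S : Finset (Fin n)) (s : Set _) :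
    MeasurableSet (subtuple X S ⁻¹' s) :=
  (measurable_pi_lambda _ fun i => hXmeas i.1) (Set.to_countable s).measurableSet

variable [∀ i, Fintype (𝒳 i)] {μ : Measure Ω}

lemma ent_subtuple_pair_eq_add_of_iIndepFun [∀ i, MeasurableSpace (𝒳 i)]
    [∀ i, MeasurableSingletonClass (𝒳 i)] [IsProbabilityMeasure μ]
    {X : ∀ i, Ω → 𝒳 i} (hXmeas : ∀ i, Measurable (X i))
    (hindep : ProbabilityTheory.iIndepFun X μ) {S T : Finset (Fin n)} (hST : Disjoint S T) :
    ent μ (fun ω => (subtuple X S ω, subtuple X T ω))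
      = ent μ (subtuple X S) + ent μ (subtuple X T) :=
  ent_pair_eq_add_of_indepFun (measurable_pi_lambda _ fun i => hXmeas i.1)
    (measurable_pi_lambda _ fun i => hXmeas i.1) (hindep.indepFun_finset S T hST hXmeas)

lemma ent_subtuple_eq_pair_of_eq_union (X : ∀ i, Ω → 𝒳 i) {R S T : Finset (Fin n)}
    (h : R = S ∪ T) :
    ent μ (subtuple X R) = ent μ (fun ω => (subtuple X S ω, subtuple X T ω)) :=
  ent_eq_of_determines
    ((determines_subtuple_of_subset X (h ▸ Finset.subset_union_left)).prodMk
      (determines_subtuple_of_subset X (h ▸ Finset.subset_union_right)))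
    (determines_subtuple_of_subset_union X h.le)

lemma ent_pair_subtuple_eq_of_eq_union {γ : Type*} [Fintype γ] (Z : Ω → γ) (X : ∀ i, Ω → 𝒳 i)
    {R S T : Finset (Fin n)} (h : R = S ∪ T) :
    ent μ (fun ω => (Z ω, subtuple X R ω))
      = ent μ (fun ω => ((Z ω, subtuple X S ω), subtuple X T ω)) :=
  ent_eq_of_determines
    (((determines_fst _ _).prodMk ((determines_snd _ _).trans
        (determines_subtuple_of_subset X (h ▸ Finset.subset_union_left)))).prodMk
      ((determines_snd _ _).trans
        (determines_subtuple_of_subset X (h ▸ Finset.subset_union_right))))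
    (((determines_fst _ _).trans (determines_fst _ _)).prodMk
      ((((determines_fst _ _).trans (determines_snd _ _)).prodMk (determines_snd _ _)).trans
        (determines_subtuple_of_subset_union X h.le)))

variable [∀ J, Fintype (𝒴 J)] (φ : ∀ J : Finset (Fin n), (∀ j : J, 𝒳 j.1) → 𝒴 J)

lemma ent_subtuple_pair_outputs_eq (X : ∀ i, Ω → 𝒳 i) (p : Finset (Fin n) → Prop)
    [DecidablePred p] {S T : Finset (Fin n)} (h : ∀ J, p J → J ⊆ S ∪ T) :
    ent μ (fun ω => (subtuple X S ω, (outputs φ X p ω, subtuple X T ω)))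
      = ent μ (fun ω => (subtuple X S ω, subtuple X T ω)) :=
  ent_eq_of_determines
    ((determines_fst _ _).prodMk ((determines_snd _ _).trans (determines_snd _ _)))
    ((determines_fst _ _).prodMk
      (((determines_subtuple_of_subset_union X le_rfl).trans
        (determines_outputs_of_subset φ X h)).prodMk (determines_snd _ _)))

lemma ent_outputs_pair_subtuple_eq (X : ∀ i, Ω → 𝒳 i) {p q : Finset (Fin n) → Prop}
    [DecidablePred p] [DecidablePred q] {S : Finset (Fin n)} (hpq : ∀ J, p J → q J ∨ J ⊆ S)
    (hqp : ∀ J, q J → p J) :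
    ent μ (fun ω => (outputs φ X p ω, subtuple X S ω))
      = ent μ (fun ω => (outputs φ X q ω, subtuple X S ω)) :=
  ent_eq_of_determines
    ((determines_outputs φ X fun J hJ => Or.inl (hqp J hJ)).prodMk (determines_snd _ _))
    ((determines_outputs φ X hpq).prodMk (determines_snd _ _))

end SubtupleEntropy

section IndexCoding

variable {Ω : Type*} [MeasurableSpace Ω] {n : ℕ} {𝒳 : Fin n → Type*} {𝒴 : Finset (Fin n) → Type*}

theorem ent_le_cond_ent_outputs_general
    [∀ i, Fintype (𝒳 i)]
    [∀ i, MeasurableSpace (𝒳 i)] [∀ i, DiscreteMeasurableSpace (𝒳 i)]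
    [∀ J, Fintype (𝒴 J)]
    (μ : Measure Ω) [IsProbabilityMeasure μ]
    (X : ∀ i, Ω → 𝒳 i) (hXmeas : ∀ i, Measurable (X i))
    (hindep : ProbabilityTheory.iIndepFun X μ)
    (φ : ∀ J : Finset (Fin n), (∀ j : J, 𝒳 j.1) → 𝒴 J)
    (U V : Finset (Fin n)) (hUVc : U ⊆ Vᶜ)
    (hdec : cent μ (subtuple X V)
      (fun ω => (outputs φ X (fun J => J.Nonempty) ω, subtuple X Vᶜ ω)) = 0) :
    ent μ (subtuple X V)
      ≤ cent μ (outputs φ X (fun J => J.Nonempty ∧ (J ∩ V).Nonempty))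
          (subtuple X U) := by
  set YN := outputs φ X (fun J => J.Nonempty)
  set YP := outputs φ X (fun J => J.Nonempty ∧ (J ∩ V).Nonempty)
  set W := Vᶜ \ U
  have hV : Vᶜ = U ∪ W := (Finset.union_sdiff_of_subset hUVc).symm
  have key : ent μ (subtuple X V) + (ent μ (subtuple X U) + ent μ (subtuple X W))
      ≤ ent μ (fun ω => (YP ω, subtuple X U ω)) + ent μ (subtuple X W) := calc
    _ = ent μ (subtuple X V) + ent μ (subtuple X Vᶜ) := by
      rw [ent_subtuple_eq_pair_of_eq_union X hV,
        ent_subtuple_pair_eq_add_of_iIndepFun hXmeas hindep disjoint_sdiff_self_right]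
    _ = ent μ (fun ω => (subtuple X V ω, subtuple X Vᶜ ω)) :=
      (ent_subtuple_pair_eq_add_of_iIndepFun hXmeas hindep disjoint_compl_right).symm
    _ = ent μ (fun ω => (subtuple X V ω, (YN ω, subtuple X Vᶜ ω))) :=
      (ent_subtuple_pair_outputs_eq φ X _ fun J _ => by simp).symm
    _ = ent μ (fun ω => (YN ω, subtuple X Vᶜ ω)) := sub_eq_zero.mp hdec
    _ = ent μ (fun ω => (YP ω, subtuple X Vᶜ ω)) :=
      ent_outputs_pair_subtuple_eq φ X (fun J hJ => (em (Disjoint J V)).elim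
          (fun h => Or.inr (Finset.subset_compl_iff_disjoint_right.2 h))
          (fun h => Or.inl ⟨hJ, Finset.not_disjoint_iff_nonempty_inter.1 h⟩))
        fun J hJ => hJ.1
    _ = ent μ (fun ω => ((YP ω, subtuple X U ω), subtuple X W ω)) :=
      ent_pair_subtuple_eq_of_eq_union YP X hV
    _ ≤ ent μ (fun ω => (YP ω, subtuple X U ω)) + ent μ (subtuple X W) :=
      ent_pair_le_add (fun _ => measurableSet_preimage_outputs_subtuple hXmeas φ _ U _)
        (fun _ => measurableSet_preimage_subtuple hXmeas W _)
  rw [cent]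
  linarith

/-- If `X_1, …, X_n` are mutually independent, `U, V` are disjoint, `U ⊆ V̄`, and
`H[X_V | Y_N, X_{V̄}] = 0`, then with `P = {J ∈ N : J ∩ V ≠ ∅}` one has
`H[X_V] ≤ H[Y_P | X_U]`. -/
theorem ent_le_cond_ent_outputs
    [∀ i, Fintype (𝒳 i)] [∀ i, Nonempty (𝒳 i)]
    [∀ i, MeasurableSpace (𝒳 i)] [∀ i, DiscreteMeasurableSpace (𝒳 i)]
    [∀ J, Fintype (𝒴 J)]
    (μ : Measure Ω) [IsProbabilityMeasure μ]
    (X : ∀ i, Ω → 𝒳 i) (hXmeas : ∀ i, Measurable (X i))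
    (hindep : ProbabilityTheory.iIndepFun X μ)
    (φ : ∀ J : Finset (Fin n), (∀ j : J, 𝒳 j.1) → 𝒴 J)
    (U V : Finset (Fin n)) (hUV : Disjoint U V) (hUVc : U ⊆ Vᶜ)
    (hdec : cent μ (subtuple X V)
      (fun ω => (outputs φ X (fun J => J.Nonempty) ω, subtuple X Vᶜ ω)) = 0) :
    ent μ (subtuple X V)
      ≤ cent μ (outputs φ X (fun J => J.Nonempty ∧ (J ∩ V).Nonempty))
          (subtuple X U) :=
  ent_le_cond_ent_outputs_general μ X hXmeas hindep φ U V hUVc hdec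

end IndexCoding

end DistIndexCoding
end

section
/- Let t_1, …, t_n and (r_J : J ∈ N) be natural numbers, and for each J ∈ N let φ_J : (Π_{j∈J} Fin(2^{t_j})) → Fin(2^{r_J}); for a message tuple x ∈ Π_{i∈[n]} Fin(2^{t_i}) write y(x) = (φ_J(x_J) : J ∈ N). Suppose U, V ⊆ [n] are disjoint and there exist functions g_1, g_2, g_3 such that for every message tuple x: g_1(y(x)) = x_U, g_2(y(x), x_{U∪V}) = x_{[n]∖(U∪V)}, and g_3(y(x), x_{[n]∖V}) = x_V. Then Σ_{i∈[n]} t_i ≤ Σ_{J∈N} r_J + Σ_{J∈N : J∩V≠∅, J⊄U∪V} r_J. (Zero-error, single-shot form of Theorem 2, the sum-rate outer bound for distributed index coding.) -/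
/-!
Zero-error, single-shot form of Theorem 2: a distributed index code has one server
for each nonempty subset `J` of `Fin n`, observing the messages `x_J` and
broadcasting an `r_J`-bit codeword `φ_J (x_J) ∈ Fin (2 ^ r_J)`; each message `x_i`
is a `t_i`-bit string, i.e. an element of `Fin (2 ^ t_i)`.

Add to the broadcast `y(x)` the codewords `φ_J` of the servers `J` that meet `V` without
lying inside `U ∪ V`, evaluated at the message tuple `x'` obtained from `x` by resetting
`x_V` to a fixed value. This extended broadcast is injective: it gives `x_U`, hence
`x'_{U ∪ V}`; every other server either misses `V`, so sees the same messages under `x` and `x'`,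
or lies inside `U ∪ V`, so sees only `x'_{U ∪ V}`. Hence `y(x')` is known as well, the second
decoder returns `x'_{[n]∖(U∪V)} = x_{[n]∖(U∪V)}`; the third decoder then returns `x_V`.
Comparing the number `2 ^ Σ t_i` of message tuples with the number of possible extended
broadcasts gives the bound.
-/

namespace DistIndexCoding

variable {n : ℕ}

/-- The tuple of all server outputs `y(x) = (φ_J(x_J) : J ∈ N)`. -/
def encode (t : Fin n → ℕ) (r : Finset (Fin n) → ℕ)
    (φ : ∀ J : Finset (Fin n), (∀ j : J, Fin (2 ^ t j.1)) → Fin (2 ^ r J))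
    (x : ∀ i, Fin (2 ^ t i)) :
    ∀ J : {J : Finset (Fin n) // J.Nonempty}, Fin (2 ^ r J.1) :=
  fun J => φ J.1 (fun j => x j.1)

open Finset Function

theorem sum_le_sum_filter_add_sum_filter_of_injective {ι κ : Type*} [Fintype ι] [Fintype κ]
    (t : ι → ℕ) (r : κ → ℕ) (p q : κ → Prop) [DecidablePred p] [DecidablePred q]
    (F : (∀ i, Fin (2 ^ t i)) →
      (∀ J : {J // p J}, Fin (2 ^ r J.1)) × (∀ J : {J // q J}, Fin (2 ^ r J.1)))
    (hF : Injective F) :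
    ∑ i, t i ≤ ∑ J ∈ univ.filter p, r J + ∑ J ∈ univ.filter q, r J := by
  classical
  have card_pi_subtype (s : κ → Prop) [DecidablePred s] :
      Fintype.card (∀ J : {J // s J}, Fin (2 ^ r J.1)) = 2 ^ ∑ J ∈ univ.filter s, r J := by
    simp [Fintype.card_pi, prod_pow_eq_pow_sum, sum_subtype (univ.filter s) (p := s)]
  have hcard := Fintype.card_le_of_injective F hF
  rw [Fintype.card_prod, card_pi_subtype, card_pi_subtype, ← pow_add, Fintype.card_pi] at hcard
  simp only [Fintype.card_fin, prod_pow_eq_pow_sum] at hcard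
  exact (Nat.pow_le_pow_iff_right one_lt_two).mp hcard

theorem restrict_eq_restrict_iff {ι : Type*} {π : ι → Type*} {s : Finset ι} {f g : ∀ i, π i} :
    s.restrict f = s.restrict g ↔ ∀ i ∈ s, f i = g i :=
  ⟨fun h i hi => congrFun h ⟨i, hi⟩, fun h => funext fun i => h i i.2⟩

theorem piecewise_eq_piecewise_of_mem_union {ι : Type*} {π : ι → Type*} [DecidableEq ι]
    {U V : Finset ι} (z : ∀ i, π i) {f g : ∀ i, π i} (hU : ∀ i ∈ U, f i = g i) :
    ∀ i ∈ U ∪ V, V.piecewise z f i = V.piecewise z g i := by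
  intro i hi
  by_cases hiV : i ∈ V
  · simp only [piecewise_eq_of_mem _ _ _ hiV]
  · simp only [piecewise_eq_of_notMem _ _ _ hiV, hU i ((mem_union.1 hi).resolve_right hiV)]

def Crossing (U V J : Finset (Fin n)) : Prop :=
  J.Nonempty ∧ (J ∩ V).Nonempty ∧ ¬ J ⊆ U ∪ V

variable {t : Fin n → ℕ} {r : Finset (Fin n) → ℕ}
  {φ : ∀ J : Finset (Fin n), (∀ j : J, Fin (2 ^ t j.1)) → Fin (2 ^ r J)} {U V : Finset (Fin n)}

theorem encode_piecewise_eq (z : ∀ i, Fin (2 ^ t i)) {x₁ x₂ : ∀ i, Fin (2 ^ t i)}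
    (hE : encode t r φ x₁ = encode t r φ x₂) (hU : ∀ i ∈ U, x₁ i = x₂ i)
    (hS : ∀ J, Crossing U V J →
      φ J (J.restrict (V.piecewise z x₁)) = φ J (J.restrict (V.piecewise z x₂))) :
    encode t r φ (V.piecewise z x₁) = encode t r φ (V.piecewise z x₂) := by
  funext ⟨J, hJ⟩
  by_cases hJV : (J ∩ V).Nonempty
  · by_cases hJUV : J ⊆ U ∪ V
    · exact congrArg (φ J) <| restrict_eq_restrict_iff.2 fun i hi =>
        piecewise_eq_piecewise_of_mem_union z hU i (hJUV hi)
    · exact hS J ⟨hJ, hJV, hJUV⟩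
  · have hoff (x : ∀ i, Fin (2 ^ t i)) : J.restrict (V.piecewise z x) = J.restrict x :=
      restrict_eq_restrict_iff.2 fun i hi =>
        piecewise_eq_of_notMem _ _ _ fun hiV => hJV ⟨i, mem_inter.2 ⟨hi, hiV⟩⟩
    change φ J (J.restrict (V.piecewise z x₁)) = φ J (J.restrict (V.piecewise z x₂))
    rw [hoff, hoff]
    exact congrFun hE ⟨J, hJ⟩

theorem injective_encode_prod_crossing (z : ∀ i, Fin (2 ^ t i))
    (g₁ : (∀ J : {J : Finset (Fin n) // J.Nonempty}, Fin (2 ^ r J.1)) → ∀ i : U, Fin (2 ^ t i.1))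
    (g₂ : (∀ J : {J : Finset (Fin n) // J.Nonempty}, Fin (2 ^ r J.1)) →
      (∀ i : (U ∪ V : Finset (Fin n)), Fin (2 ^ t i.1)) →
      ∀ i : (univ \ (U ∪ V) : Finset (Fin n)), Fin (2 ^ t i.1))
    (g₃ : (∀ J : {J : Finset (Fin n) // J.Nonempty}, Fin (2 ^ r J.1)) →
      (∀ i : (Vᶜ : Finset (Fin n)), Fin (2 ^ t i.1)) → ∀ i : V, Fin (2 ^ t i.1))
    (h₁ : ∀ x, g₁ (encode t r φ x) = U.restrict x)
    (h₂ : ∀ x, g₂ (encode t r φ x) ((U ∪ V).restrict x) = (univ \ (U ∪ V)).restrict x)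
    (h₃ : ∀ x, g₃ (encode t r φ x) (Vᶜ.restrict x) = V.restrict x) :
    Injective fun x : ∀ i, Fin (2 ^ t i) =>
      (encode t r φ x,
        fun J : {J // Crossing U V J} => φ J.1 (J.1.restrict (V.piecewise z x))) := by
  intro x₁ x₂ h
  obtain ⟨hE, hS⟩ := Prod.mk.inj h
  have hU : ∀ i ∈ U, x₁ i = x₂ i := restrict_eq_restrict_iff.1 <| by rw [← h₁, hE, h₁]
  have hE' := encode_piecewise_eq z hE hU fun J hJ => congrFun hS ⟨J, hJ⟩
  have hUV := restrict_eq_restrict_iff.2 (piecewise_eq_piecewise_of_mem_union (V := V) z hU)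
  have hrest : ∀ i ∉ U ∪ V, x₁ i = x₂ i := by
    have hW : (univ \ (U ∪ V)).restrict (V.piecewise z x₁)
        = (univ \ (U ∪ V)).restrict (V.piecewise z x₂) := by
      rw [← h₂, hE', hUV, h₂]
    intro i hi
    have hiV : i ∉ V := fun hiV => hi (mem_union_right _ hiV)
    have := restrict_eq_restrict_iff.1 hW i (mem_sdiff.2 ⟨mem_univ i, hi⟩)
    rwa [piecewise_eq_of_notMem _ _ _ hiV, piecewise_eq_of_notMem _ _ _ hiV] at this
  have hVc : ∀ i ∉ V, x₁ i = x₂ i := fun i hiV =>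
    if hiU : i ∈ U then hU i hiU else hrest i (by simp [hiU, hiV])
  have hV : ∀ i ∈ V, x₁ i = x₂ i := restrict_eq_restrict_iff.1 <| by
    rw [← h₃, hE, restrict_eq_restrict_iff.2 fun i hi => hVc i (mem_compl.1 hi), h₃]
  funext i
  exact if hi : i ∈ V then hV i hi else hVc i hi

theorem theorem2_zero_error_general (t : Fin n → ℕ) (r : Finset (Fin n) → ℕ)
    (φ : ∀ J : Finset (Fin n), (∀ j : J, Fin (2 ^ t j.1)) → Fin (2 ^ r J))
    (U V : Finset (Fin n))
    (g₁ : (∀ J : {J : Finset (Fin n) // J.Nonempty}, Fin (2 ^ r J.1)) →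
          ∀ i : U, Fin (2 ^ t i.1))
    (g₂ : (∀ J : {J : Finset (Fin n) // J.Nonempty}, Fin (2 ^ r J.1)) →
          (∀ i : (U ∪ V : Finset (Fin n)), Fin (2 ^ t i.1)) →
          ∀ i : (Finset.univ \ (U ∪ V) : Finset (Fin n)), Fin (2 ^ t i.1))
    (g₃ : (∀ J : {J : Finset (Fin n) // J.Nonempty}, Fin (2 ^ r J.1)) →
          (∀ i : (Vᶜ : Finset (Fin n)), Fin (2 ^ t i.1)) →
          ∀ i : (V : Finset (Fin n)), Fin (2 ^ t i.1))
    (h₁ : ∀ x : ∀ i, Fin (2 ^ t i),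
      g₁ (encode t r φ x) = fun i : U => x i.1)
    (h₂ : ∀ x : ∀ i, Fin (2 ^ t i),
      g₂ (encode t r φ x) (fun i : (U ∪ V : Finset (Fin n)) => x i.1)
        = fun i : (Finset.univ \ (U ∪ V) : Finset (Fin n)) => x i.1)
    (h₃ : ∀ x : ∀ i, Fin (2 ^ t i),
      g₃ (encode t r φ x) (fun i : (Vᶜ : Finset (Fin n)) => x i.1)
        = fun i : (V : Finset (Fin n)) => x i.1) :
    ∑ i, t i
      ≤ (∑ J ∈ Finset.univ.filter (fun J : Finset (Fin n) => J.Nonempty), r J)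
        + ∑ J ∈ Finset.univ.filter
            (fun J : Finset (Fin n) => J.Nonempty ∧ (J ∩ V).Nonempty ∧ ¬ J ⊆ U ∪ V), r J :=
  sum_le_sum_filter_add_sum_filter_of_injective t r _ _ _
    (injective_encode_prod_crossing (fun _ => 0) g₁ g₂ g₃ h₁ h₂ h₃)

/-- **Zero-error, single-shot form of Theorem 2** (sum-rate outer bound for
distributed index coding): if disjoint `U, V ⊆ [n]` are such that `x_U` is
recoverable from `y(x)`, `x_{[n]∖(U∪V)}` is recoverable from `(y(x), x_{U∪V})`, and
`x_V` is recoverable from `(y(x), x_{V̄})`, then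
`Σ_i t_i ≤ Σ_{J∈N} r_J + Σ_{J∈N : J∩V≠∅, J⊄U∪V} r_J`. -/
theorem theorem2_zero_error (t : Fin n → ℕ) (r : Finset (Fin n) → ℕ)
    (φ : ∀ J : Finset (Fin n), (∀ j : J, Fin (2 ^ t j.1)) → Fin (2 ^ r J))
    (U V : Finset (Fin n)) (hUV : Disjoint U V)
    (g₁ : (∀ J : {J : Finset (Fin n) // J.Nonempty}, Fin (2 ^ r J.1)) →
          ∀ i : U, Fin (2 ^ t i.1))
    (g₂ : (∀ J : {J : Finset (Fin n) // J.Nonempty}, Fin (2 ^ r J.1)) →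
          (∀ i : (U ∪ V : Finset (Fin n)), Fin (2 ^ t i.1)) →
          ∀ i : (Finset.univ \ (U ∪ V) : Finset (Fin n)), Fin (2 ^ t i.1))
    (g₃ : (∀ J : {J : Finset (Fin n) // J.Nonempty}, Fin (2 ^ r J.1)) →
          (∀ i : (Vᶜ : Finset (Fin n)), Fin (2 ^ t i.1)) →
          ∀ i : (V : Finset (Fin n)), Fin (2 ^ t i.1))
    (h₁ : ∀ x : ∀ i, Fin (2 ^ t i),
      g₁ (encode t r φ x) = fun i : U => x i.1)
    (h₂ : ∀ x : ∀ i, Fin (2 ^ t i),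
      g₂ (encode t r φ x) (fun i : (U ∪ V : Finset (Fin n)) => x i.1)
        = fun i : (Finset.univ \ (U ∪ V) : Finset (Fin n)) => x i.1)
    (h₃ : ∀ x : ∀ i, Fin (2 ^ t i),
      g₃ (encode t r φ x) (fun i : (Vᶜ : Finset (Fin n)) => x i.1)
        = fun i : (V : Finset (Fin n)) => x i.1) :
    ∑ i, t i
      ≤ (∑ J ∈ Finset.univ.filter (fun J : Finset (Fin n) => J.Nonempty), r J)
        + ∑ J ∈ Finset.univ.filter
            (fun J : Finset (Fin n) => J.Nonempty ∧ (J ∩ V).Nonempty ∧ ¬ J ⊆ U ∪ V), r J :=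
  theorem2_zero_error_general t r φ U V g₁ g₂ g₃ h₁ h₂ h₃

end DistIndexCoding
end
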